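/- Let μ > 0 be a non-integer real number and let p ∈ V_μ with CDF F_n = ∑_{m≤n} p_m. If F_{⌊μ⌋} ≥ ⌊μ⌋+1−μ, then W1(p, p*) = 2 [ ∑_{n ≤ ⌊μ⌋} (⌊μ⌋+1−n) p_n − (⌊μ⌋+1−μ) ], and if F_{⌊μ⌋} < ⌊μ⌋+1−μ, then W1(p, p*) = 2 ∑_{n ≤ ⌊μ⌋} (⌊μ⌋−n) p_n, where p* is the shifted Bernoulli distribution with mean μ. -/

import Mathlib

/-- Cumulative distribution function of a pmf on ℕ: `F n = ∑_{m ≤ n} p m`. -/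
noncomputable def cdf (p : ℕ → ℝ) (n : ℕ) : ℝ := ∑ m ∈ Finset.range (n + 1), p m

/-- Wasserstein-1 distance between two pmfs on ℕ, `W1(p,q) = ∑_{n ≥ 0} |F_n - H_n|`. -/
noncomputable def W1 (p q : ℕ → ℝ) : ℝ := ∑' n : ℕ, |cdf p n - cdf q n|

/-- Gini index of a pmf on ℕ with mean μ: `G[p] = (1/(2μ)) ∑_i ∑_j |i-j| p_i p_j`. -/
noncomputable def Gini (μ : ℝ) (p : ℕ → ℝ) : ℝ :=
  (1 / (2 * μ)) * ∑' i : ℕ, ∑' j : ℕ, |(i : ℝ) - (j : ℝ)| * p i * p j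

/-- The shifted Bernoulli distribution with mean μ:
`p*_{⌊μ⌋} = 1 - μ + ⌊μ⌋`, `p*_{⌊μ⌋+1} = μ - ⌊μ⌋`, `p*_n = 0` otherwise. -/
noncomputable def pstar (μ : ℝ) : ℕ → ℝ := fun n =>
  if n = ⌊μ⌋₊ then 1 - μ + (⌊μ⌋₊ : ℝ)
  else if n = ⌊μ⌋₊ + 1 then μ - (⌊μ⌋₊ : ℝ)
  else 0

/-- The Dirac distribution on ℕ concentrated at `k`. -/
noncomputable def dirac (k : ℕ) : ℕ → ℝ := fun n => if n = k then 1 else 0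

/-!
Write `k = ⌊μ⌋₊`, `F` for the CDF of `p` and `c = k + 1 - μ`. The CDF of `p*` is `0` below `k`,
`1 - c` at `k` and `1` above `k`, so
`W1(p, p*) = ∑_{n<k} F_n + |F_k - (1 - c)| + ∑_{n>k} (1 - F_n)`.
The tail-sum formula `∑_n (1 - F_n) = μ` turns the last sum into `μ - ∑_{n≤k} (1 - F_n)`, and
`∑_{n≤k} F_n = ∑_{n≤k} (k + 1 - n) p_n`; the two cases are the two signs of `F_k - (1 - c)`.
-/

open Finset Filter Topology

section Cdf

variable (p : ℕ → ℝ)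

lemma sum_range_cdf (N : ℕ) :
    ∑ n ∈ range N, cdf p n = ∑ m ∈ range N, ((N : ℝ) - m) * p m := by
  induction N with
  | zero => simp
  | succ N ih =>
    have hsplit : ∀ m, (((N + 1 : ℕ) : ℝ) - m) * p m = ((N : ℝ) - m) * p m + p m := fun m => by
      push_cast; ring
    rw [sum_range_succ, ih]
    simp only [hsplit, sum_add_distrib, sum_range_succ (fun m => ((N : ℝ) - m) * p m), sub_self,
      zero_mul, add_zero, cdf]

lemma cdf_succ (n : ℕ) : cdf p (n + 1) = cdf p n + p (n + 1) :=
  sum_range_succ _ _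

lemma cdf_nonneg (hpos : ∀ n, 0 ≤ p n) (n : ℕ) : 0 ≤ cdf p n :=
  sum_nonneg fun m _ => hpos m

lemma cdf_le_one (hpos : ∀ n, 0 ≤ p n) (hsum : HasSum p 1) (n : ℕ) : cdf p n ≤ 1 :=
  hsum.tsum_eq ▸ hsum.summable.sum_le_tsum _ fun m _ => hpos m

lemma sum_range_one_sub_cdf (hsum : HasSum p 1) (N : ℕ) :
    ∑ n ∈ range N, (1 - cdf p n) = ∑ m ∈ range N, (m : ℝ) * p m + N * ∑' m, p (m + N) := by
  have htail : ∑' m, p (m + N) = 1 - ∑ m ∈ range N, p m :=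
    ((hasSum_nat_add_iff' N).2 hsum).tsum_eq
  simp only [sum_sub_distrib, sum_range_cdf, sub_mul, mul_sum, htail, sum_const, card_range,
    nsmul_eq_mul, mul_one, mul_sub]
  ring

lemma hasSum_one_sub_cdf {μ : ℝ} (hpos : ∀ n, 0 ≤ p n) (hsum : HasSum p 1)
    (hmean : HasSum (fun n : ℕ => (n : ℝ) * p n) μ) :
    HasSum (fun n => 1 - cdf p n) μ := by
  rw [hasSum_iff_tendsto_nat_of_nonneg fun n => sub_nonneg.2 (cdf_le_one p hpos hsum n)]
  simp only [sum_range_one_sub_cdf p hsum]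
  -- `N · P(X ≥ N) ≤ E[X; X ≥ N]`, and the latter is the tail of a convergent series
  have hmarkov (N : ℕ) : (N : ℝ) * ∑' m, p (m + N) ≤ ∑' m, ((m + N : ℕ) : ℝ) * p (m + N) := by
    rw [← tsum_mul_left]
    refine ((summable_nat_add_iff N).2 hsum.summable |>.mul_left _).tsum_le_tsum
      (fun m => mul_le_mul_of_nonneg_right (by simp) (hpos _))
      ((summable_nat_add_iff N).2 hmean.summable)
  have htail : Tendsto (fun N : ℕ => (N : ℝ) * ∑' m, p (m + N)) atTop (𝓝 0) :=
    squeeze_zero (fun N => mul_nonneg N.cast_nonneg (tsum_nonneg fun m => hpos _)) hmarkov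
      (tendsto_sum_nat_add fun n => (n : ℝ) * p n)
  simpa using hmean.tendsto_sum_nat.add htail

lemma W1_eq_of_cdf_eq_one {μ : ℝ} {q : ℕ → ℝ} (hpos : ∀ n, 0 ≤ p n) (hsum : HasSum p 1)
    (hmean : HasSum (fun n : ℕ => (n : ℝ) * p n) μ) {k : ℕ} (hq : ∀ n, k < n → cdf q n = 1) :
    W1 p q = ∑ n ∈ range (k + 1), |cdf p n - cdf q n| +
      (μ - ∑ n ∈ range (k + 1), (1 - cdf p n)) := by
  set D := ∑ n ∈ range (k + 1), |cdf p n - cdf q n|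
  have htail : HasSum (fun n => |cdf p (n + (k + 1)) - cdf q (n + (k + 1))|)
      (D + (μ - ∑ n ∈ range (k + 1), (1 - cdf p n)) - D) := by
    rw [add_sub_cancel_left]
    refine ((hasSum_nat_add_iff' (k + 1)).2 (hasSum_one_sub_cdf p hpos hsum hmean)).congr_fun ?_
    intro n
    rw [hq _ (by omega), abs_of_nonpos (sub_nonpos.2 (cdf_le_one p hpos hsum _)), neg_sub]
  exact ((hasSum_nat_add_iff' (k + 1)).1 htail).tsum_eq

end Cdf

section Pstar

variable (μ : ℝ)

lemma pstar_of_lt_floor {n : ℕ} (hn : n < ⌊μ⌋₊) : pstar μ n = 0 := by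
  simp [pstar, hn.ne, (hn.trans (Nat.lt_succ_self _)).ne]

lemma pstar_of_floor_succ_lt {n : ℕ} (hn : ⌊μ⌋₊ + 1 < n) : pstar μ n = 0 := by
  simp [pstar, hn.ne', (Nat.lt_of_succ_lt hn).ne']

lemma cdf_pstar_of_lt_floor {n : ℕ} (hn : n < ⌊μ⌋₊) : cdf (pstar μ) n = 0 :=
  sum_eq_zero fun m hm => pstar_of_lt_floor μ (by rw [mem_range] at hm; omega)

lemma cdf_pstar_floor : cdf (pstar μ) ⌊μ⌋₊ = 1 - μ + ⌊μ⌋₊ := by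
  rw [cdf, sum_range_succ, sum_eq_zero fun m hm => pstar_of_lt_floor μ (mem_range.1 hm)]
  simp [pstar]

lemma cdf_pstar_of_floor_lt {n : ℕ} (hn : ⌊μ⌋₊ < n) : cdf (pstar μ) n = 1 := by
  induction n, hn using Nat.le_induction with
  | base => simp [cdf_succ, cdf_pstar_floor, pstar]
  | succ n hn ih => rw [cdf_succ, ih, pstar_of_floor_succ_lt μ (by omega), add_zero]

end Pstar

lemma W1_pstar {μ : ℝ} {p : ℕ → ℝ} (hpos : ∀ n, 0 ≤ p n) (hsum : HasSum p 1)
    (hmean : HasSum (fun n : ℕ => (n : ℝ) * p n) μ) :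
    W1 p (pstar μ) = 2 * ∑ n ∈ range (⌊μ⌋₊ + 1), ((⌊μ⌋₊ : ℝ) + 1 - n) * p n - cdf p ⌊μ⌋₊ +
      |cdf p ⌊μ⌋₊ - (1 - μ + ⌊μ⌋₊)| - (⌊μ⌋₊ + 1 - μ) := by
  have hbelow : ∑ n ∈ range ⌊μ⌋₊, |cdf p n - cdf (pstar μ) n| = ∑ n ∈ range ⌊μ⌋₊, cdf p n :=
    sum_congr rfl fun n hn => by
      rw [cdf_pstar_of_lt_floor μ (mem_range.1 hn), sub_zero, abs_of_nonneg (cdf_nonneg p hpos n)]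
  have hS : ∑ n ∈ range (⌊μ⌋₊ + 1), cdf p n =
      ∑ n ∈ range (⌊μ⌋₊ + 1), ((⌊μ⌋₊ : ℝ) + 1 - n) * p n := by
    rw [sum_range_cdf]
    push_cast
    rfl
  rw [W1_eq_of_cdf_eq_one p hpos hsum hmean fun n => cdf_pstar_of_floor_lt μ, sum_range_succ,
    hbelow, cdf_pstar_floor, sum_sub_distrib, sum_const, card_range, nsmul_one, ← hS,
    sum_range_succ (cdf p)]
  push_cast
  ring

theorem stmt_13_general (μ : ℝ) (p : ℕ → ℝ)
    (hpos : ∀ n, 0 ≤ p n) (hsum : HasSum p 1)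
    (hmean : HasSum (fun n : ℕ => (n : ℝ) * p n) μ) :
    (cdf p ⌊μ⌋₊ ≥ (⌊μ⌋₊ : ℝ) + 1 - μ →
      W1 p (pstar μ) =
        2 * ((∑ n ∈ Finset.range (⌊μ⌋₊ + 1), ((⌊μ⌋₊ : ℝ) + 1 - (n : ℝ)) * p n) -
          ((⌊μ⌋₊ : ℝ) + 1 - μ))) ∧
    (cdf p ⌊μ⌋₊ < (⌊μ⌋₊ : ℝ) + 1 - μ →
      W1 p (pstar μ) =
        2 * ∑ n ∈ Finset.range (⌊μ⌋₊ + 1), ((⌊μ⌋₊ : ℝ) - (n : ℝ)) * p n) := by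
  have hW := W1_pstar hpos hsum hmean
  have hshift : ∑ n ∈ range (⌊μ⌋₊ + 1), ((⌊μ⌋₊ : ℝ) - n) * p n =
      ∑ n ∈ range (⌊μ⌋₊ + 1), ((⌊μ⌋₊ : ℝ) + 1 - n) * p n - cdf p ⌊μ⌋₊ := by
    rw [cdf, ← sum_sub_distrib]
    exact sum_congr rfl fun n _ => by ring
  constructor
  · intro h
    rw [hW, abs_of_nonneg (by linarith)]
    ring
  · intro h
    rw [hW, abs_of_neg (by linarith), hshift]
    ring

theorem stmt_13 (μ : ℝ) (hμ : 0 < μ) (hni : ∀ n : ℕ, μ ≠ (n : ℝ)) (p : ℕ → ℝ)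
    (hpos : ∀ n, 0 ≤ p n) (hsum : HasSum p 1)
    (hmean : HasSum (fun n : ℕ => (n : ℝ) * p n) μ) :
    (cdf p ⌊μ⌋₊ ≥ (⌊μ⌋₊ : ℝ) + 1 - μ →
      W1 p (pstar μ) =
        2 * ((∑ n ∈ Finset.range (⌊μ⌋₊ + 1), ((⌊μ⌋₊ : ℝ) + 1 - (n : ℝ)) * p n) -
          ((⌊μ⌋₊ : ℝ) + 1 - μ))) ∧
    (cdf p ⌊μ⌋₊ < (⌊μ⌋₊ : ℝ) + 1 - μ →
      W1 p (pstar μ) =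
        2 * ∑ n ∈ Finset.range (⌊μ⌋₊ + 1), ((⌊μ⌋₊ : ℝ) - (n : ℝ)) * p n) :=
  stmt_13_general μ p hpos hsum hmean
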